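/- There is an absolute constant C > 0 such that the following holds. Let δ ∈ 2^{-ℕ}, let A, B ⊆ δ·ℤ be finite nonempty sets, let B' ⊆ B be nonempty, let c ∈ ℝ, and let k ∈ ℕ. Then |A + c·(2^k B)|_δ ≤ C · (|A + A|/|A|) · (|2^{k+1}B|/|2^k B|) · (|2^k B|/|2^k B'|) · |A + c·(2^k B')|_δ, where mB denotes the m-fold sumset B + ⋯ + B. -/

import Mathlib

open MeasureTheory Metric Set Pointwise

/-- δ is a dyadic scale: δ = 2^{-j} for some j ∈ ℕ. -/
def isDyadic (δ : ℝ) : Prop := ∃ j : ℕ, δ = 2 ^ (-(j : ℤ))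

/-- The δ-grid (δ·ℤ) ∩ [0,1]. -/
def grid (δ : ℝ) : Set ℝ := {x : ℝ | (∃ k : ℤ, x = (k : ℝ) * δ) ∧ x ∈ Set.Icc (0:ℝ) 1}

/-- δ·ℤ -/
def gridZ (δ : ℝ) : Set ℝ := {x : ℝ | ∃ k : ℤ, x = (k : ℝ) * δ}

/-- Least number of dyadic intervals of length δ needed to cover X. -/
noncomputable def covN (δ : ℝ) (X : Set ℝ) : ℕ :=
  sInf {n : ℕ | ∃ s : Finset ℤ, s.card = n ∧
    X ⊆ ⋃ k ∈ s, Set.Ico ((k : ℝ) * δ) (((k : ℝ) + 1) * δ)}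

/-- Support of a measure on ℝ. -/
def sptm (ν : Measure ℝ) : Set ℝ := {x : ℝ | ∀ ε > 0, 0 < ν (Metric.ball x ε)}

/-- The projection π_c(x,y) = x + cy. -/
def piC (c : ℝ) : ℝ × ℝ → ℝ := fun p => p.1 + c * p.2

/-- The exceptional set 𝓔(A∣B,ε): those c for which some large subset B' ⊆ B has
|A + cB'|_δ < δ^{-ε}|A|. -/
noncomputable def Eexc (δ ε : ℝ) (A B : Set ℝ) : Set ℝ :=
  {c : ℝ | ∃ B' ⊆ B, δ ^ ε * (B.ncard : ℝ) ≤ (B'.ncard : ℝ) ∧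
    (covN δ (A + c • B') : ℝ) < δ ^ (-ε) * (A.ncard : ℝ)}

/-- k-fold sumset (sumN 0 A = {0}). -/
def sumN : ℕ → Set ℝ → Set ℝ
  | 0, _ => {0}
  | (n+1), A => sumN n A + A


/-
The δ-cells met by `A + c S` are counted by an injection. For each such cell `n` fix a
witness `a_n + c s_n` in it; then `(n, a, t) ↦ (a_n + a, s_n + t, cell (a + c t), carry)`
maps `cells(A + c S) × A × S'` injectively into `(A + A) × (S + S') × cells(A + c S') × {0, 1}`,
because the cell of `(a_n + a) + c (s_n + t)` is `n + cell (a + c t)` plus a carry of `0` or `1`.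
This gives `|A + c S|_δ |A| |S'| ≤ 2 |A + A| |S + S'| |A + c S'|_δ`, and with `S = 2^k B`,
`S' = 2^k B'` and `S + S' ⊆ 2^(k+1) B` the theorem follows with `C = 2`.
-/

lemma sumN_add (m n : ℕ) (X : Set ℝ) : sumN (m + n) X = sumN m X + sumN n X := by
  induction n with
  | zero => simp [sumN]
  | succ n ih => rw [← add_assoc, sumN, ih, sumN, add_assoc]

lemma sumN_finite {X : Set ℝ} (hX : X.Finite) (n : ℕ) : (sumN n X).Finite := by
  induction n with
  | zero => exact finite_singleton 0
  | succ n ih => exact ih.add hX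

lemma sumN_nonempty {X : Set ℝ} (hX : X.Nonempty) (n : ℕ) : (sumN n X).Nonempty := by
  induction n with
  | zero => exact singleton_nonempty 0
  | succ n ih => exact ih.add hX

lemma sumN_mono {X Y : Set ℝ} (h : X ⊆ Y) (n : ℕ) : sumN n X ⊆ sumN n Y := by
  induction n with
  | zero => exact subset_rfl
  | succ n ih => exact add_subset_add ih h

lemma floor_div_add_sub_mem (δ x y : ℝ) :
    ⌊(x + y) / δ⌋ - ⌊x / δ⌋ - ⌊y / δ⌋ ∈ ({0, 1} : Set ℤ) := by
  have h₁ := Int.le_floor_add (x / δ) (y / δ)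
  have h₂ := Int.le_floor_add_floor (x / δ) (y / δ)
  rw [← add_div] at h₁ h₂
  simp only [mem_insert_iff, mem_singleton_iff]
  omega

section Cells

variable {δ : ℝ}

lemma floor_div_eq_iff_mem_Ico (hδ : 0 < δ) {x : ℝ} {k : ℤ} :
    ⌊x / δ⌋ = k ↔ x ∈ Ico (k * δ) ((k + 1) * δ) := by
  rw [Int.floor_eq_iff, le_div_iff₀ hδ, div_lt_iff₀ hδ, mem_Ico]

lemma subset_iUnion_Ico_iff (hδ : 0 < δ) (X : Set ℝ) (s : Finset ℤ) :
    X ⊆ ⋃ k ∈ s, Ico (k * δ) ((k + 1) * δ) ↔ (fun x => ⌊x / δ⌋) '' X ⊆ s := by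
  rw [image_subset_iff]
  simp only [subset_def, mem_iUnion, exists_prop, mem_preimage, Finset.mem_coe,
    ← floor_div_eq_iff_mem_Ico hδ, exists_eq_right']

lemma covN_eq_ncard_image_floor (hδ : 0 < δ) (X : Set ℝ) :
    covN δ X = ((fun x => ⌊x / δ⌋) '' X).ncard := by
  simp only [covN, subset_iUnion_Ico_iff hδ]
  by_cases hfin : ((fun x => ⌊x / δ⌋) '' X).Finite
  · refine le_antisymm (Nat.sInf_le ⟨hfin.toFinset, (ncard_eq_toFinset_card _ hfin).symm, ?_⟩)
      (le_csInf ⟨_, hfin.toFinset, rfl, by simp⟩ ?_)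
    · simp
    · rintro n ⟨s, rfl, hs⟩
      simpa using ncard_le_ncard hs s.finite_toSet
  · rw [Infinite.ncard hfin, Nat.sInf_eq_zero]
    right
    exact eq_empty_of_forall_notMem fun n ⟨s, _, hs⟩ => hfin (s.finite_toSet.subset hs)

lemma covN_add_smul_mul_le (hδ : 0 < δ) (c : ℝ) {A A' S S' : Set ℝ} (hA : A.Finite)
    (hA' : A'.Finite) (hS : S.Finite) (hS' : S'.Finite) :
    covN δ (A + c • S) * (A'.ncard * S'.ncard) ≤
      2 * ((A + A').ncard * ((S + S').ncard * covN δ (A' + c • S'))) := by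
  rw [covN_eq_ncard_image_floor hδ, covN_eq_ncard_image_floor hδ]
  set cell : ℝ → ℤ := fun x => ⌊x / δ⌋
  set T := cell '' (A + c • S)
  set U := cell '' (A' + c • S')
  have hwitness : ∀ n ∈ T, ∃ p : ℝ × ℝ, p.1 ∈ A ∧ p.2 ∈ S ∧ cell (p.1 + c * p.2) = n := by
    rintro _ ⟨_, ⟨a, ha, _, ⟨s, hs, rfl⟩, rfl⟩, rfl⟩
    exact ⟨(a, s), ha, hs, rfl⟩
  choose! w hwA hwS hw using hwitness
  let f : ℤ × ℝ × ℝ → ℝ × ℝ × ℤ × ℤ := fun p =>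
    ((w p.1).1 + p.2.1, (w p.1).2 + p.2.2, cell (p.2.1 + c * p.2.2),
      cell (((w p.1).1 + p.2.1) + c * ((w p.1).2 + p.2.2)) - p.1 - cell (p.2.1 + c * p.2.2))
  have hsum (n : ℤ) (a t : ℝ) : ((w n).1 + a) + c * ((w n).2 + t) =
      ((w n).1 + c * (w n).2) + (a + c * t) := by ring
  have hmaps : ∀ p ∈ T ×ˢ A' ×ˢ S', f p ∈ (A + A') ×ˢ (S + S') ×ˢ U ×ˢ ({0, 1} : Set ℤ) := by
    rintro ⟨n, a, t⟩ ⟨hn, ha, ht⟩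
    refine ⟨add_mem_add (hwA n hn) ha, add_mem_add (hwS n hn) ht,
      ⟨a + c * t, add_mem_add ha (smul_mem_smul_set ht), rfl⟩, ?_⟩
    have hcarry := floor_div_add_sub_mem δ ((w n).1 + c * (w n).2) (a + c * t)
    rw [show ⌊((w n).1 + c * (w n).2) / δ⌋ = n from hw n hn] at hcarry
    simpa only [f, cell, hsum] using hcarry
  have hinj : InjOn f (T ×ˢ A' ×ˢ S') := by
    rintro ⟨n₁, a₁, t₁⟩ - ⟨n₂, a₂, t₂⟩ - h
    simp only [f, Prod.mk.injEq] at h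
    obtain ⟨h₁, h₂, h₃, h₄⟩ := h
    rw [h₁, h₂, h₃] at h₄
    obtain rfl : n₁ = n₂ := by omega
    simp only [Prod.mk.injEq, true_and]
    constructor <;> linarith
  have hfin : ((A + A') ×ˢ (S + S') ×ˢ U ×ˢ ({0, 1} : Set ℤ)).Finite :=
    (hA.add hA').prod <| (hS.add hS').prod <|
      ((hA'.add (hS'.smul_set)).image cell).prod (toFinite _)
  calc T.ncard * (A'.ncard * S'.ncard) = (T ×ˢ A' ×ˢ S').ncard := by simp only [ncard_prod]
    _ ≤ ((A + A') ×ˢ (S + S') ×ˢ U ×ˢ ({0, 1} : Set ℤ)).ncard :=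
      ncard_le_ncard_of_injOn f hmaps hinj hfin
    _ = 2 * ((A + A').ncard * ((S + S').ncard * U.ncard)) := by
      rw [ncard_prod, ncard_prod, ncard_prod, ncard_pair zero_ne_one]
      ring

end Cells

/-- Covering-number inequality relating |A + c·2^k B|_δ to |A + c·2^k B'|_δ via
doubling ratios (the main chain of inequalities behind (2.24) in the paper). -/
theorem stmt16 :
    ∃ C : ℝ, 0 < C ∧
    ∀ δ : ℝ, isDyadic δ →
    ∀ A B B' : Set ℝ, A.Finite → B.Finite → A.Nonempty → B.Nonempty →
    B' ⊆ B → B'.Nonempty →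
    A ⊆ gridZ δ → B ⊆ gridZ δ →
    ∀ c : ℝ, ∀ k : ℕ,
    (covN δ (A + c • sumN (2 ^ k) B) : ℝ) ≤
      C * (((A + A).ncard : ℝ) / (A.ncard : ℝ))
        * (((sumN (2 ^ (k + 1)) B).ncard : ℝ) / ((sumN (2 ^ k) B).ncard : ℝ))
        * (((sumN (2 ^ k) B).ncard : ℝ) / ((sumN (2 ^ k) B').ncard : ℝ))
        * (covN δ (A + c • sumN (2 ^ k) B') : ℝ) := by
  refine ⟨2, two_pos, ?_⟩
  rintro δ ⟨j, hj⟩ A B B' hA hB hAne - hB'B hB'ne - - c k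
  have hδ : 0 < δ := hj ▸ zpow_pos two_pos _
  set S := sumN (2 ^ k) B
  set S' := sumN (2 ^ k) B'
  have hS : S.Finite := sumN_finite hB _
  have hS'S : S' ⊆ S := sumN_mono hB'B _
  have hS' : S'.Finite := hS.subset hS'S
  have hS'pos : 0 < S'.ncard := (ncard_pos hS').2 (sumN_nonempty hB'ne _)
  have hSpos : 0 < S.ncard := hS'pos.trans_le (ncard_le_ncard hS'S hS)
  have hApos : 0 < A.ncard := (ncard_pos hA).2 hAne
  have hdouble : sumN (2 ^ (k + 1)) B = S + S := by rw [pow_succ, mul_two, sumN_add]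
  have hcount : covN δ (A + c • S) * (A.ncard * S'.ncard) ≤
      2 * ((A + A).ncard * ((S + S).ncard * covN δ (A + c • S'))) :=
    (covN_add_smul_mul_le hδ c hA hA hS hS').trans <| by
      have hSS' := ncard_le_ncard (add_subset_add_left hS'S) (hS.add hS)
      gcongr
  rw [hdouble]
  calc (covN δ (A + c • S) : ℝ)
      ≤ 2 * ((A + A).ncard * ((S + S).ncard * covN δ (A + c • S'))) / (A.ncard * S'.ncard) := by
        rw [le_div_iff₀ (by positivity)]
        exact_mod_cast hcount
    _ = _ := by field_simp
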